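/- If f ∈ L²(ℝ) belongs to a sampling space, then the sequence of samples {f(k)}_{k∈ℤ} belongs to ℓ²(ℤ). -/

import Mathlib

open MeasureTheory Complex Filter FourierTransform

noncomputable section

/-- The Fourier transform `f̂(ω) = ∫ f(x) e^{-2πixω} dx`. -/
def FT (f : ℝ → ℂ) : ℝ → ℂ := 𝓕 f

/-- The translate `f(· - k)`. -/
def tr (k : ℤ) (f : ℝ → ℂ) : ℝ → ℂ := fun x => f (x - k)

/-- The grammian `G_f(ω) = Σ_k |f̂(ω+k)|²`. -/
def Gram (f : ℝ → ℂ) (ω : ℝ) : ℝ := ∑' k : ℤ, ‖FT f (ω + k)‖ ^ 2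

/-- `E_f = {ω : G_f(ω) > 0}`. -/
def Eset (f : ℝ → ℂ) : Set ℝ := {ω | 0 < Gram f ω}

/-- The Zak transform `Z_f(x,ω) = Σ_k f(x+k) e^{-2πikω}`. -/
def Zak (f : ℝ → ℂ) (x ω : ℝ) : ℂ :=
  ∑' k : ℤ, f (x + k) * Complex.exp (((-2 * Real.pi * k * ω : ℝ) : ℂ) * Complex.I)

/-- The `L²` inner product of two functions on `ℝ`. -/
def ip (f g : ℝ → ℂ) : ℂ := ∫ x : ℝ, f x * (starRingEnd ℂ) (g x)

/-- Membership in `L²(ℝ)`. -/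
def L2fun (f : ℝ → ℂ) : Prop := MemLp f 2 (volume : Measure ℝ)

/-- The shift invariant space `S(ψ)`: the `L²`-closure of the span of the integer
translates of `ψ`, as a set of elements of `Lp`. -/
def SISset (ψ : ℝ → ℂ) : Set (Lp ℂ 2 (volume : Measure ℝ)) :=
  closure (Submodule.span ℂ
    {g : Lp ℂ 2 (volume : Measure ℝ) | ∃ k : ℤ, (g : ℝ → ℂ) =ᵐ[volume] tr k ψ} : Set _)

/-- `f` belongs (as an a.e. class) to the shift invariant space `S(ψ)`. -/
def memSIS (ψ f : ℝ → ℂ) : Prop :=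
  ∃ g ∈ SISset ψ, (g : ℝ → ℂ) =ᵐ[volume] f

/-- The translates of `s` form a frame (with bounds `A`, `B`) for the space `S(ψ)`. -/
def IsFrameOf (s ψ : ℝ → ℂ) : Prop :=
  ∃ A B : ℝ, 0 < A ∧ 0 < B ∧ ∀ f : ℝ → ℂ, L2fun f → memSIS ψ f →
    A * (∫ x : ℝ, ‖f x‖ ^ 2) ≤ (∑' k : ℤ, ‖ip f (tr k s)‖ ^ 2) ∧
    (∑' k : ℤ, ‖ip f (tr k s)‖ ^ 2) ≤ B * (∫ x : ℝ, ‖f x‖ ^ 2)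

/-- `s` is a sampling function for the sampling space `V(ψ) = S(ψ)`. -/
structure IsSamplingFunction (ψ s : ℝ → ℂ) : Prop where
  /-- `s` belongs to `V(ψ)`. -/
  memV : L2fun s ∧ memSIS ψ s
  /-- The translates of `s` form a frame of `V(ψ)`. -/
  frame : IsFrameOf s ψ
  /-- For every `ℓ²` sequence, `Σ c_k s(·-k)` converges pointwise (indeed uniformly)
  to a continuous function. -/
  ptconv : ∀ c : ℤ → ℂ, Summable (fun k : ℤ => ‖c k‖ ^ 2) →
    ∃ g : ℝ → ℂ, Continuous g ∧
      TendstoUniformly (fun (F : Finset ℤ) (x : ℝ) => ∑ k ∈ F, c k * s (x - k)) g atTop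
  /-- Every `f ∈ V(ψ)` has a continuous representative `g` with
  `g = Σ_k g(k) s(·-k)`, uniformly and in `L²`. -/
  recon : ∀ f : ℝ → ℂ, L2fun f → memSIS ψ f →
    ∃ g : ℝ → ℂ, Continuous g ∧ g =ᵐ[volume] f ∧
      TendstoUniformly (fun (F : Finset ℤ) (x : ℝ) => ∑ k ∈ F, g k * s (x - k)) g atTop ∧
      Tendsto (fun F : Finset ℤ =>
          eLpNorm (fun x => g x - ∑ k ∈ F, g k * s (x - k)) 2 (volume : Measure ℝ))
        atTop (nhds 0)

/-- `V(ψ)` is a sampling space. -/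
def IsSamplingSpace (ψ : ℝ → ℂ) : Prop := ∃ s : ℝ → ℂ, IsSamplingFunction ψ s

end

/-!
The reconstruction formula says that `∑ₖ f(k) s(· - k)` converges to `f` in `L²` along the
filter of finite subsets of `ℤ`, i.e. unconditionally. In a Hilbert space an unconditionally
summable family has square-summable norms (Orlicz): the partial sums are bounded, and choosing
signs greedily with the parallelogram law makes `∑ ‖xₖ‖²` at most the square of a signed partial
sum. Since `‖f(k) s(· - k)‖₂ = |f(k)| ‖s‖₂`, the samples are square summable unless `s = 0`,
in which case `f = 0`.
-/

open Topology

section Orlicz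

variable {ι E : Type*}

theorem Summable.exists_norm_finset_sum_le [SeminormedAddCommGroup E] {x : ι → E}
    (hx : Summable x) : ∃ C, ∀ F : Finset ι, ‖∑ k ∈ F, x k‖ ≤ C := by
  classical
  obtain ⟨F₀, hF₀⟩ := hx.vanishing (Metric.ball_mem_nhds 0 one_pos)
  refine ⟨∑ k ∈ F₀, ‖x k‖ + 1, fun F => ?_⟩
  rw [← Finset.sum_inter_add_sum_sdiff F F₀]
  have hfar : ‖∑ k ∈ F \ F₀, x k‖ < 1 := mem_ball_zero_iff.1 (hF₀ _ Finset.sdiff_disjoint)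
  have hnear : ‖∑ k ∈ F ∩ F₀, x k‖ ≤ ∑ k ∈ F₀, ‖x k‖ :=
    (norm_sum_le _ _).trans (Finset.sum_le_sum_of_subset_of_nonneg Finset.inter_subset_right
      fun _ _ _ => norm_nonneg _)
  linarith [norm_add_le (∑ k ∈ F ∩ F₀, x k) (∑ k ∈ F \ F₀, x k)]

theorem exists_subset_sum_norm_sq_le_norm_sq (𝕜 : Type*) [RCLike 𝕜] [NormedAddCommGroup E]
    [InnerProductSpace 𝕜 E] [DecidableEq ι] (x : ι → E) (F : Finset ι) :
    ∃ S ⊆ F, ∑ k ∈ F, ‖x k‖ ^ 2 ≤ ‖∑ k ∈ S, x k - ∑ k ∈ F \ S, x k‖ ^ 2 := by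
  induction F using Finset.induction_on with
  | empty => exact ⟨∅, subset_rfl, by simp⟩
  | insert a F ha ih =>
    obtain ⟨S, hSF, hS⟩ := ih
    have haS : a ∉ S := fun h => ha (hSF h)
    set v := ∑ k ∈ S, x k - ∑ k ∈ F \ S, x k
    -- by the parallelogram law, one of `‖v ± x a‖²` is at least `‖v‖² + ‖x a‖²`
    have par := parallelogram_law_with_norm 𝕜 v (x a)
    rw [Finset.sum_insert ha]
    by_cases hplus : ‖v‖ ^ 2 + ‖x a‖ ^ 2 ≤ ‖v + x a‖ ^ 2
    · refine ⟨insert a S, Finset.insert_subset_insert a hSF, ?_⟩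
      rw [Finset.sum_insert haS, Finset.insert_sdiff_insert, Finset.sdiff_insert_of_notMem ha,
        show x a + ∑ k ∈ S, x k - ∑ k ∈ F \ S, x k = v + x a by
          rw [add_sub_assoc, add_comm]]
      linarith
    · refine ⟨S, hSF.trans (Finset.subset_insert a F), ?_⟩
      rw [Finset.insert_sdiff_of_notMem F haS,
        Finset.sum_insert fun h => ha (Finset.mem_sdiff.1 h).1,
        show ∑ k ∈ S, x k - (x a + ∑ k ∈ F \ S, x k) = v - x a from
          sub_add_eq_sub_sub_swap _ _ _]
      linarith

theorem Summable.summable_norm_sq (𝕜 : Type*) [RCLike 𝕜] [NormedAddCommGroup E]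
    [InnerProductSpace 𝕜 E] {x : ι → E} (hx : Summable x) :
    Summable fun k => ‖x k‖ ^ 2 := by
  classical
  obtain ⟨C, hC⟩ := hx.exists_norm_finset_sum_le
  refine summable_of_sum_le (c := (2 * C) ^ 2) (fun k => sq_nonneg _) fun F => ?_
  obtain ⟨S, -, hS⟩ := exists_subset_sum_norm_sq_le_norm_sq 𝕜 x F
  have hsigned : ‖∑ k ∈ S, x k - ∑ k ∈ F \ S, x k‖ ≤ 2 * C := by
    linarith [norm_sub_le (∑ k ∈ S, x k) (∑ k ∈ F \ S, x k), hC S, hC (F \ S)]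
  exact hS.trans (pow_le_pow_left₀ (norm_nonneg _) hsigned 2)

end Orlicz

theorem MeasureTheory.Lp.coeFn_finset_sum {α E ι : Type*} [MeasurableSpace α] {μ : Measure α}
    [NormedAddCommGroup E] {p : ENNReal} (u : ι → Lp E p μ) (F : Finset ι) :
    ⇑(∑ k ∈ F, u k) =ᵐ[μ] ∑ k ∈ F, ⇑(u k) := by
  classical
  induction F using Finset.induction_on with
  | empty => simpa using Lp.coeFn_zero E p μ
  | insert a F ha ih =>
    simp only [Finset.sum_insert ha]
    exact (Lp.coeFn_add _ _).trans (EventuallyEq.rfl.add ih)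

theorem memLp_tr {s : ℝ → ℂ} {p : ENNReal} (hs : MemLp s p) (k : ℤ) : MemLp (tr k s) p :=
  hs.comp_measurePreserving (measurePreserving_sub_right volume (k : ℝ))

theorem norm_toLp_tr {s : ℝ → ℂ} {p : ENNReal} (hs : MemLp s p) (k : ℤ) :
    ‖(memLp_tr hs k).toLp (tr k s)‖ = ‖hs.toLp s‖ :=
  Lp.norm_compMeasurePreserving (hs.toLp s) (measurePreserving_sub_right volume (k : ℝ))

theorem hasSum_smul_toLp_tr_of_tendsto_eLpNorm {s g : ℝ → ℂ} {c : ℤ → ℂ} (hs : MemLp s 2)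
    (hg : MemLp g 2)
    (h : Tendsto (fun F : Finset ℤ => eLpNorm (fun x => g x - ∑ k ∈ F, c k * s (x - k)) 2 volume)
      atTop (𝓝 0)) :
    HasSum (fun k => c k • (memLp_tr hs k).toLp (tr k s)) (hg.toLp g) := by
  refine (Lp.tendsto_Lp_iff_tendsto_eLpNorm _ g hg).2 (h.congr fun F => ?_)
  have hterm : ∀ᵐ x, ∀ k : ℤ, (c k • (memLp_tr hs k).toLp (tr k s)) x = c k * s (x - k) :=
    ae_all_iff.2 fun k => by
      filter_upwards [Lp.coeFn_smul (c k) ((memLp_tr hs k).toLp (tr k s)),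
        (memLp_tr hs k).coeFn_toLp] with x hsmul htr
      rw [hsmul, Pi.smul_apply, htr, smul_eq_mul, tr]
  rw [← eLpNorm_neg]
  refine eLpNorm_congr_ae ?_
  filter_upwards [Lp.coeFn_finset_sum (fun k => c k • (memLp_tr hs k).toLp (tr k s)) F, hterm]
    with x hsum hx
  simp only [Pi.neg_apply, Pi.sub_apply, hsum, Finset.sum_apply, hx]
  ring

theorem summable_norm_sq_of_tendsto_eLpNorm {s g : ℝ → ℂ} (hs : MemLp s 2) (hg : MemLp g 2)
    (hgc : Continuous g)
    (h : Tendsto (fun F : Finset ℤ => eLpNorm (fun x => g x - ∑ k ∈ F, g k * s (x - k)) 2 volume)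
      atTop (𝓝 0)) :
    Summable fun k : ℤ => ‖g k‖ ^ 2 := by
  have hsum := hasSum_smul_toLp_tr_of_tendsto_eLpNorm hs hg h
  by_cases hs0 : hs.toLp s = 0
  · have hterms : ∀ k : ℤ, g k • (memLp_tr hs k).toLp (tr k s) = 0 := fun k => by
      rw [← norm_eq_zero, norm_smul, norm_toLp_tr hs, hs0, norm_zero, mul_zero]
    have hg0 : hg.toLp g = 0 := hsum.unique (by simp [hterms, hasSum_zero])
    have hg_ae : g =ᵐ[volume] 0 := hg.coeFn_toLp.symm.trans (hg0 ▸ Lp.coeFn_zero ℂ 2 volume)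
    rw [(hgc.ae_eq_iff_eq volume continuous_zero).1 hg_ae]
    simp
  · have hsq := hsum.summable.summable_norm_sq ℂ
    simp only [norm_smul, norm_toLp_tr hs, mul_pow] at hsq
    exact (summable_mul_right_iff (pow_ne_zero 2 (norm_ne_zero_iff.2 hs0))).1 hsq

/-- if `f` (continuous representative) belongs to a sampling space, then
the samples `{f(k)}` are square summable. -/
theorem stmt13 (φ s f : ℝ → ℂ) (hs : IsSamplingFunction φ s)
    (hf2 : L2fun f) (hfm : memSIS φ f) (hfc : Continuous f) :
    Summable (fun k : ℤ => ‖f k‖ ^ 2) := by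
  obtain ⟨g, hgc, hgf, -, hL2⟩ := hs.recon f hf2 hfm
  obtain rfl : g = f := (hgc.ae_eq_iff_eq volume hfc).1 hgf
  exact summable_norm_sq_of_tendsto_eLpNorm hs.memV.1 hf2 hgc hL2
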